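/- Let G be a finite group, p a prime, and P a Sylow p-subgroup of G. If (∏_{x ∈ P} λ_G(x))^p ≤ n_p(G)^{|P|}, then |𝔘_p(G)|^p ≥ |P|^p · n_p(G)^{p-1} (equivalently, the p-Frobenius ratio |𝔘_p(G)|/|P| is at least n_p(G)^{(p-1)/p}). -/

import Mathlib

/-!
Weighting each pair `(x, Q)` with `x ∈ Q` by `1 / λ(x)` and counting it once per `p`-element and
once per Sylow subgroup gives `|𝔘_p(G)| = n_p(G) · ∑_{x ∈ P} 1 / λ(x)`, since `λ` is invariant under
conjugation and all Sylow subgroups are conjugate. AM-GM applied to the `|P|` numbers `1 / λ(x)`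
then yields `(n_p(G) · |P|)^|P| ≤ |𝔘_p(G)|^|P| · ∏_{x ∈ P} λ(x)`; raising this to the `p`-th power
and inserting the hypothesis gives the claim after taking `|P|`-th roots.
-/

open Subgroup

/-- `λ_G(x)`: the number of Sylow `p`-subgroups of `G` containing `x`. -/
noncomputable def sylCount (p : ℕ) {G : Type*} [Group G] (x : G) : ℕ :=
  Nat.card {Q : Sylow p G // x ∈ Q}

lemma Real.prod_le_sum_div_card_pow {ι : Type*} (s : Finset ι) {z : ι → ℝ}
    (hz : ∀ i ∈ s, 0 ≤ z i) : ∏ i ∈ s, z i ≤ ((∑ i ∈ s, z i) / s.card) ^ s.card := by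
  rcases s.eq_empty_or_nonempty with rfl | hs
  · simp
  have h := Real.geom_mean_le_arith_mean s (fun _ => 1) z (fun _ _ => zero_le_one)
    (by simpa using hs.card_pos) hz
  simp only [Real.rpow_one, Finset.sum_const, nsmul_eq_mul, mul_one, one_mul] at h
  rwa [Real.rpow_inv_le_iff_of_pos (Finset.prod_nonneg hz)
    (div_nonneg (Finset.sum_nonneg hz) (Nat.cast_nonneg _)) (by simpa using hs.card_pos),
    Real.rpow_natCast] at h

lemma pow_mul_pow_sub_one_le_pow {R : Type*} [CommSemiring R] [LinearOrder R]
    [IsStrictOrderedRing R] {n a u c : R} {m p : ℕ} (hn : 0 < n) (ha : 0 ≤ a) (hu : 0 ≤ u)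
    (hm : m ≠ 0) (hp : p ≠ 0) (h₁ : (n * a) ^ m ≤ u ^ m * c) (h₂ : c ^ p ≤ n ^ m) :
    a ^ p * n ^ (p - 1) ≤ u ^ p := by
  have key : (a ^ p * n ^ (p - 1)) ^ m * n ^ m ≤ (u ^ p) ^ m * n ^ m :=
    calc (a ^ p * n ^ (p - 1)) ^ m * n ^ m = ((n * a) ^ m) ^ p := by
          rw [← mul_pow, mul_assoc, pow_sub_one_mul hp, ← mul_pow, ← pow_mul, ← pow_mul,
            mul_comm m p, mul_comm a n]
      _ ≤ (u ^ m * c) ^ p := pow_le_pow_left₀ (by positivity) h₁ p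
      _ = (u ^ p) ^ m * c ^ p := by ring
      _ ≤ (u ^ p) ^ m * n ^ m := mul_le_mul_of_nonneg_left h₂ (by positivity)
  exact (pow_le_pow_iff_left₀ (by positivity) (by positivity) hm).mp
    (le_of_mul_le_mul_right key (by positivity))

section

variable {G : Type*} [Group G] {p : ℕ}

lemma Sylow.conj_mem_smul_iff (g x : G) (Q : Sylow p G) : g * x * g⁻¹ ∈ g • Q ↔ x ∈ Q := by
  change _ ∈ ((g • Q : Sylow p G) : Subgroup G) ↔ _
  rw [Sylow.coe_subgroup_smul, mem_pointwise_smul_iff_inv_smul_mem, MulAut.smul_def,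
    MulAut.inv_apply, MulAut.conj_symm_apply, show g⁻¹ * (g * x * g⁻¹) * g = x by group]
  rfl

lemma sylCount_conj (g x : G) : sylCount p (g * x * g⁻¹) = sylCount p x :=
  (Nat.card_congr (Equiv.subtypeEquiv (MulAction.toPerm g) fun Q =>
    (Sylow.conj_mem_smul_iff g x Q).symm)).symm

lemma sylCount_pos_iff [Finite G] {x : G} : 0 < sylCount p x ↔ ∃ Q : Sylow p G, x ∈ Q := by
  rw [sylCount, Nat.card_pos_iff, nonempty_subtype]
  exact and_iff_left Subtype.finite

lemma exists_sylow_mem_iff [Finite G] [Fact p.Prime] {x : G} :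
    (∃ Q : Sylow p G, x ∈ Q) ↔ ∃ n, orderOf x = p ^ n := by
  refine ⟨fun ⟨Q, hx⟩ => ?_, fun ⟨n, hn⟩ => ?_⟩
  · simpa using IsPGroup.iff_orderOf.mp Q.isPGroup' ⟨x, hx⟩
  · have : IsPGroup p (zpowers x) := IsPGroup.of_card (by rw [Nat.card_zpowers, hn])
    obtain ⟨Q, hQ⟩ := this.exists_le_sylow
    exact ⟨Q, hQ (mem_zpowers x)⟩

section Counting

variable [Fintype G]
open scoped Classical

lemma sum_sylow_sum_mem {M : Type*} [AddCommMonoid M] (f : G → M) :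
    ∑ Q : Sylow p G, ∑ x : G with x ∈ Q, f x = ∑ x, sylCount p x • f x := by
  simp only [Finset.sum_filter]
  rw [Finset.sum_comm]
  refine Finset.sum_congr rfl fun x _ => ?_
  rw [← Finset.sum_filter, Finset.sum_const, sylCount, Nat.card_eq_fintype_card,
    Fintype.card_subtype]

lemma sum_mem_sylow_eq_of_conj_invariant [Fact p.Prime] {M : Type*} [AddCommMonoid M]
    {f : G → M} (hf : ∀ g x, f (g * x * g⁻¹) = f x) (P Q : Sylow p G) :
    ∑ x : G with x ∈ P, f x = ∑ x : G with x ∈ Q, f x := by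
  obtain ⟨g, rfl⟩ := MulAction.exists_smul_eq G P Q
  refine Finset.sum_equiv (MulAut.conj g).toEquiv (fun x => ?_) fun x _ => (hf g x).symm
  simp [Sylow.conj_mem_smul_iff]

lemma card_pElements_eq_card_sylow_mul_sum_inv_sylCount [Fact p.Prime] (P : Sylow p G) :
    (Nat.card {g : G | ∃ n : ℕ, orderOf g = p ^ n} : ℝ) =
      Nat.card (Sylow p G) * ∑ x : G with x ∈ P, (sylCount p x : ℝ)⁻¹ := by
  have hcount := sum_sylow_sum_mem (p := p) fun x : G => (sylCount p x : ℝ)⁻¹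
  rw [Finset.sum_congr rfl fun Q _ => sum_mem_sylow_eq_of_conj_invariant
      (fun g x => by rw [sylCount_conj]) Q P, Finset.sum_const, Finset.card_univ, nsmul_eq_mul,
    ← Nat.card_eq_fintype_card] at hcount
  rw [hcount, Nat.card_eq_fintype_card, Fintype.card_subtype, Finset.card_filter, Nat.cast_sum]
  refine Finset.sum_congr rfl fun x _ => ?_
  simp only [Set.mem_ofPred_eq, ← exists_sylow_mem_iff, ← sylCount_pos_iff, nsmul_eq_mul]
  -- `λ(x) · λ(x)⁻¹` is `1` on `p`-elements and `0 · 0⁻¹ = 0` elsewhere.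
  rcases (sylCount p x).eq_zero_or_pos with h | h
  · simp [h]
  · simp [h, h.ne']

lemma card_sylow_mul_card_pow_le [Fact p.Prime] (P : Sylow p G) :
    (Nat.card (Sylow p G) * Nat.card (P : Subgroup G)) ^ Nat.card (P : Subgroup G) ≤
      Nat.card {g : G | ∃ n : ℕ, orderOf g = p ^ n} ^ Nat.card (P : Subgroup G) *
        ∏ᶠ x ∈ ((P : Subgroup G) : Set G), sylCount p x := by
  have hP : Nat.card (P : Subgroup G) = (Finset.univ.filter fun x : G => x ∈ P).card := by
    rw [Nat.card_eq_fintype_card, Fintype.card_subtype]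
    rfl
  have hprod : ∏ᶠ x ∈ ((P : Subgroup G) : Set G), sylCount p x =
      ∏ x : G with x ∈ P, sylCount p x := by
    rw [← finprod_mem_coe_finset]
    simp
  have hpos : 0 < ∏ x : G with x ∈ P, sylCount p x :=
    Finset.prod_pos fun x hx => sylCount_pos_iff.mpr ⟨P, (Finset.mem_filter.mp hx).2⟩
  have hN : (0 : ℝ) < Nat.card (Sylow p G) := Nat.cast_pos.mpr Nat.card_pos
  have hk : (0 : ℝ) < Nat.card (P : Subgroup G) := Nat.cast_pos.mpr Nat.card_pos
  have hamgm : ((∏ x : G with x ∈ P, sylCount p x : ℕ) : ℝ)⁻¹ ≤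
      (Nat.card {g : G | ∃ n : ℕ, orderOf g = p ^ n} /
        (Nat.card (Sylow p G) * Nat.card (P : Subgroup G)) : ℝ) ^ Nat.card (P : Subgroup G) := by
    rw [card_pElements_eq_card_sylow_mul_sum_inv_sylCount P, mul_div_mul_left _ _ hN.ne', hP,
      Nat.cast_prod, ← Finset.prod_inv_distrib]
    exact Real.prod_le_sum_div_card_pow _ fun x _ => by positivity
  rw [div_pow, le_div_iff₀ (pow_pos (mul_pos hN hk) _), inv_mul_eq_div,
    div_le_iff₀ (by exact_mod_cast hpos)] at hamgm
  rw [hprod]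
  exact_mod_cast hamgm

end Counting

end

/-- If `(∏_{x ∈ P} λ_G(x))^p ≤ n_p(G)^{|P|}`, then the `p`-Frobenius ratio satisfies
`|𝔘_p(G)|/|P| ≥ n_p(G)^{(p-1)/p}`, i.e. `|𝔘_p(G)|^p ≥ |P|^p · n_p(G)^{p-1}`. -/
theorem frobenius_ratio_of_lambda_ineq {G : Type*} [Group G] [Fintype G]
    (p : ℕ) (hp : p.Prime) (P : Sylow p G)
    (hlam : (∏ᶠ x ∈ ((P : Subgroup G) : Set G), sylCount p x) ^ p ≤
      Nat.card (Sylow p G) ^ Nat.card (P : Subgroup G)) :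
    Nat.card (P : Subgroup G) ^ p * Nat.card (Sylow p G) ^ (p - 1) ≤
      Nat.card {g : G | ∃ n : ℕ, orderOf g = p ^ n} ^ p := by
  have := Fact.mk hp
  exact pow_mul_pow_sub_one_le_pow Nat.card_pos (Nat.zero_le _) (Nat.zero_le _)
    Nat.card_pos.ne' hp.ne_zero (card_sylow_mul_card_pow_le P) hlam
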